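/- arXiv:2208.02050 — 2 statements merged into one kernel-verified Lean document; each statement's English description precedes it below -/
import Mathlib

section
/- Let a, b, c be nonnegative integers with c ≥ 1, k = a + 2b + 3c. Then the complete k-partite graph G = K_{5⋆(a+1), 2⋆(k−a−1)} (with a+1 partite sets of size 5 and k−a−1 partite sets of size 2) has chromatic number k, |V(G)| = 2k + 3a + 3, and G is not λ-choosable for λ = {1⋆a, 2⋆b, 3⋆c}. -/
open Finset

/-- The set `E` of `a` special colours. -/
def Eset (a : ℕ) (e : Fin a → ℕ) : Finset ℕ := Finset.image e Finset.univ

/-- The set `S_i = {s_{i,1},…,s_{i,6}}`. -/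
def Sset (c : ℕ) (s : Fin c → Fin 6 → ℕ) (i : Fin c) : Finset ℕ :=
  Finset.image (s i) Finset.univ

/-- The set `T_i = {t_{i,1},…,t_{i,4}}`. -/
def Tset (b : ℕ) (t : Fin b → Fin 4 → ℕ) (i : Fin b) : Finset ℕ :=
  Finset.image (t i) Finset.univ

/-- The indices (0-based) of the `s`-colours used in `A_1,…,A_7`. -/
def Aidx : Fin 7 → Finset (Fin 6) :=
  ![{0,2,4}, {0,2,5}, {0,1,3}, {1,2,3}, {1,4,5}, {0,1,2}, {3,4,5}]

/-- The indices (0-based) of the `t`-colours used in `B_1,…,B_7`. -/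
def Bidx : Fin 7 → Finset (Fin 4) :=
  ![{1,2}, {1,3}, {0,1}, {0,2}, {0,3}, {0,1}, {2,3}]

/-- The colour set `A_j` (`j : Fin 7`, 0-based). -/
def Aset (c : ℕ) (s : Fin c → Fin 6 → ℕ) (j : Fin 7) : Finset ℕ :=
  Finset.univ.biUnion fun i => (Aidx j).image (s i)

/-- The colour set `B_j` (`j : Fin 7`, 0-based). -/
def Bset (b : ℕ) (t : Fin b → Fin 4 → ℕ) (j : Fin 7) : Finset ℕ :=
  Finset.univ.biUnion fun i => (Bidx j).image (t i)

/-- The vertex set of `K_{5⋆(a+1), 2⋆(k-a-1)}` with `k = a+2b+3c`: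
`a+1` partite sets `U_i` of size `5` and `k-a-1` partite sets `V_j` of size `2`. -/
abbrev Vtx (a b c : ℕ) :=
  (Fin (a + 1) × Fin 5) ⊕ (Fin (a + 2*b + 3*c - a - 1) × Fin 2)

/-- The list assignment of Lemma `upper lemma 1`:
`L(u_{i,j}) = A_j ∪ B_j ∪ E` and `L(v_{i,j}) = A_{j+5} ∪ B_{j+5} ∪ E`. -/
def Lassign (a b c : ℕ) (s : Fin c → Fin 6 → ℕ) (t : Fin b → Fin 4 → ℕ)
    (e : Fin a → ℕ) : Vtx a b c → Finset ℕ
  | Sum.inl (_, j) =>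
      Aset c s (Fin.castLE (by norm_num) j) ∪ Bset b t (Fin.castLE (by norm_num) j) ∪ Eset a e
  | Sum.inr (_, j) =>
      Aset c s ⟨j.1 + 5, by omega⟩ ∪ Bset b t ⟨j.1 + 5, by omega⟩ ∪ Eset a e

/-- The partite set containing a vertex. -/
def partOf (a b c : ℕ) : Vtx a b c → Fin (a + 1) ⊕ Fin (a + 2*b + 3*c - a - 1) :=
  Sum.map Prod.fst Prod.fst

/-- The complete multipartite graph `K_{5⋆(a+1), 2⋆(k-a-1)}`. -/
def Gmp (a b c : ℕ) : SimpleGraph (Vtx a b c) :=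
  SimpleGraph.fromRel fun x y => partOf a b c x ≠ partOf a b c y

/-- `f` is a proper colouring of `G` from the lists `L`. -/
def ProperLC {V : Type*} (G : SimpleGraph V) (L : V → Finset ℕ) (f : V → ℕ) : Prop :=
  (∀ v, f v ∈ L v) ∧ ∀ ⦃u v⦄, G.Adj u v → f u ≠ f v

/-- `L` is a `λ`-list assignment for `λ` given as the list `lam`: the colour
set can be partitioned into pairwise disjoint classes `C₁,…,C_q` with
`|L(v) ∩ C_i| ≥ k_i` for every vertex `v` and every `i`. -/
def LamAssignment {V : Type*} (lam : List ℕ) (L : V → Finset ℕ) : Prop :=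
  ∃ C : List (Finset ℕ), C.Pairwise Disjoint ∧
    (∀ v, L v ⊆ C.foldr (· ∪ ·) ∅) ∧
    List.Forall₂ (fun k Ci => ∀ v, k ≤ ((L v) ∩ Ci).card) lam C

/-- `G` is `λ`-choosable. -/
def LamChoosable {V : Type*} (G : SimpleGraph V) (lam : List ℕ) : Prop :=
  ∀ L : V → Finset ℕ, LamAssignment lam L → ∃ f, ProperLC G L f

/-- `G` is `k`-choosable. -/
def Choosable {V : Type*} (G : SimpleGraph V) (k : ℕ) : Prop :=
  ∀ L : V → Finset ℕ, (∀ v, k ≤ (L v).card) → ∃ f, ProperLC G L f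

/-!
Colours come in three kinds: the `a` colours of `E`, which lie in every list, and the colours of
the `T_i` and `S_i`, whose availability at a vertex depends only on their index ("slot") in
`T_i` or `S_i` and on the position of the vertex in its part.

Give the colours of `E` weight 2 and all others weight 1, so the total weight is `2k`. In a
proper colouring the colour sets of the `k` parts are disjoint, and each has weight at least 2,
because no single colour outside `E` is available on a whole part. Hence every part has weight
exactly 2 and every colour is used. The `2b + 3c` colours available at the second vertex of a
2-part are available neither at its first vertex nor on a 5-part coloured with two colours, so
each of them colours the second vertex of a different 2-part; but there are only `2b + 3c - 1`
such parts.
-/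

open Function

namespace SimpleGraph

def fromRelNeIsoCompleteMultipartite {V ι : Type*} (φ : V → ι) :
    fromRel (fun x y => φ x ≠ φ y) ≃g completeMultipartiteGraph fun i => {v // φ v = i} where
  toEquiv := (Equiv.sigmaFiberEquiv φ).symm
  map_rel_iff' {x y} := by
    simpa [ne_comm] using fun h hxy => h (congrArg φ hxy)

theorem chromaticNumber_fromRel_ne {V ι : Type*} [Fintype ι] {φ : V → ι}
    (hφ : Surjective φ) :
    (fromRel fun x y => φ x ≠ φ y).chromaticNumber = Fintype.card ι := by
  rw [chromaticNumber_congr (fromRelNeIsoCompleteMultipartite φ)]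
  exact completeMultipartiteGraph.chromaticNumber _ fun i => ⟨_, (hφ i).choose_spec⟩

end SimpleGraph

lemma partOf_surjective (a b c : ℕ) : Surjective (partOf a b c) := by
  rintro (i | i)
  exacts [⟨.inl (i, 0), rfl⟩, ⟨.inr (i, 0), rfl⟩]

lemma card_parts (a b c : ℕ) (hbc : 1 ≤ 2 * b + 3 * c) :
    Fintype.card (Fin (a + 1) ⊕ Fin (a + 2*b + 3*c - a - 1)) = a + 2*b + 3*c := by
  simp only [Fintype.card_sum, Fintype.card_fin]
  omega

theorem chromaticNumber_Gmp (a b c : ℕ) (hbc : 1 ≤ 2 * b + 3 * c) :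
    (Gmp a b c).chromaticNumber = ((a + 2*b + 3*c : ℕ) : ℕ∞) := by
  rw [Gmp, SimpleGraph.chromaticNumber_fromRel_ne (partOf_surjective a b c), card_parts a b c hbc]

lemma Gmp_adj {a b c : ℕ} {u v : Vtx a b c} :
    (Gmp a b c).Adj u v ↔ partOf a b c u ≠ partOf a b c v := by
  simpa [Gmp, ne_comm] using fun h huv => h (congrArg _ huv)

lemma Finset.mem_foldr_union {α : Type*} [DecidableEq α] {x : α} :
    ∀ {l : List (Finset α)}, x ∈ l.foldr (· ∪ ·) ∅ ↔ ∃ s ∈ l, x ∈ s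
  | [] => by simp
  | s :: l => by simp [Finset.mem_foldr_union]

theorem lamAssignment_image_of_fibres {V α β : Type*} [Fintype α] [DecidableEq α]
    [DecidableEq β] {code : α → ℕ} (hcode : Injective code) (cls : α → β) {Q : List β}
    (hQ : Q.Nodup) (hQ_mem : ∀ x, cls x ∈ Q) (size : β → ℕ) (Λ : V → Finset α)
    (hsize : ∀ q v, size q ≤ (Λ v ∩ univ.filter (cls · = q)).card) :
    LamAssignment (Q.map size) (fun v => (Λ v).image code) := by
  refine ⟨Q.map fun q => (univ.filter (cls · = q)).image code, ?_, ?_, ?_⟩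
  · refine List.pairwise_map.2 (hQ.pairwise_of_forall_ne fun q _ q' _ hqq' => ?_)
    rw [Finset.disjoint_image hcode, Finset.disjoint_filter]
    exact fun x _ hx => hx ▸ hqq'
  · intro v n hn
    obtain ⟨x, -, rfl⟩ := Finset.mem_image.1 hn
    exact Finset.mem_foldr_union.2
      ⟨_, List.mem_map_of_mem (hQ_mem x), Finset.mem_image_of_mem _ (by simp)⟩
  · refine List.forall₂_map_left_iff.2 <| List.forall₂_map_right_iff.2 <|
      List.forall₂_same.2 fun q _ v => ?_
    rw [← Finset.image_inter _ _ hcode, Finset.card_image_of_injective _ hcode]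
    exact hsize q v

theorem sum_eq_and_forall_mem_of_pairwise_disjoint {ι α : Type*} [Fintype ι] [Fintype α]
    [DecidableEq α] {C : ι → Finset α} (hC : Pairwise (Disjoint on C)) {w : α → ℕ}
    (hw : ∀ x, 0 < w x) {n : ℕ} (hsum : ∑ x, w x ≤ Fintype.card ι * n)
    (hge : ∀ i, n ≤ ∑ x ∈ C i, w x) :
    (∀ i, ∑ x ∈ C i, w x = n) ∧ ∀ x, ∃ i, x ∈ C i := by
  have hunion : ∑ x ∈ univ.biUnion C, w x = ∑ i, ∑ x ∈ C i, w x :=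
    Finset.sum_biUnion (hC.set_pairwise _)
  have hlow : ∑ _i : ι, n ≤ ∑ i, ∑ x ∈ C i, w x := Finset.sum_le_sum fun i _ => hge i
  have hup : ∑ x ∈ univ.biUnion C, w x ≤ ∑ x, w x :=
    Finset.sum_le_sum_of_subset (subset_univ _)
  have hconst : ∑ _i : ι, n = Fintype.card ι * n := by simp
  refine ⟨fun i => ?_, fun x => ?_⟩
  · have hall := (Finset.sum_eq_sum_iff_of_le (s := univ) fun i _ => hge i).1 (by omega)
    exact (hall i (mem_univ i)).symm
  · by_contra! hx
    have := Finset.sum_lt_sum_of_subset (subset_univ (univ.biUnion C)) (mem_univ x)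
      (by simpa using hx) (hw x) fun _ _ _ => Nat.zero_le _
    omega

section Weight

variable {α : Type*} {w : α → ℕ} {s : Finset α} {x y : α}

lemma add_le_sum_of_ne [DecidableEq α] (hx : x ∈ s) (hy : y ∈ s) (hxy : x ≠ y) :
    w x + w y ≤ ∑ z ∈ s, w z := by
  rw [← Finset.sum_pair hxy]
  exact Finset.sum_le_sum_of_subset (Finset.insert_subset hx (Finset.singleton_subset_iff.2 hy))

lemma card_le_sum_of_one_le (hw : ∀ z, 1 ≤ w z) : s.card ≤ ∑ z ∈ s, w z := by
  simpa using Finset.card_nsmul_le_sum s w 1 fun z _ => hw z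

end Weight

-- `inl i` is `e_i`, `inr (inl (i, j))` is `t_{i,j}` and `inr (inr (i, j))` is `s_{i,j}`.
abbrev Colour (a b c : ℕ) := Fin a ⊕ ((Fin b × Fin 4) ⊕ (Fin c × Fin 6))

abbrev Slot := Fin 4 ⊕ Fin 6

def slotsAt (r : Fin 7) : Finset Slot := (Bidx r).disjSum (Aidx r)

section Colours

variable {a b c : ℕ}

def plainColoursAt (b c : ℕ) (r : Fin 7) : Finset ((Fin b × Fin 4) ⊕ (Fin c × Fin 6)) :=
  (univ ×ˢ Bidx r).disjSum (univ ×ˢ Aidx r)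

def coloursAt (a b c : ℕ) (r : Fin 7) : Finset (Colour a b c) :=
  univ.disjSum (plainColoursAt b c r)

lemma mem_plainColoursAt {r : Fin 7} {κ : (Fin b × Fin 4) ⊕ (Fin c × Fin 6)} :
    κ ∈ plainColoursAt b c r ↔ Sum.map Prod.snd Prod.snd κ ∈ slotsAt r := by
  rcases κ with κ | κ <;> simp [plainColoursAt, slotsAt]

lemma card_plainColoursAt_six : (plainColoursAt b c 6).card = 2 * b + 3 * c := by
  simp [plainColoursAt, Finset.card_product, Bidx, Aidx]
  ring

-- The list of `v` is `A_j ∪ B_j ∪ E` for `j = position v`.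
def position : Vtx a b c → Fin 7
  | .inl (_, j) => Fin.castLE (by norm_num) j
  | .inr (_, j) => ⟨j + 5, by omega⟩

lemma position_inl (i : Fin (a + 1)) (r : Fin 5) :
    position (.inl (i, r) : Vtx a b c) = Fin.castLE (by norm_num) r := rfl

lemma position_inr_zero (i : Fin (a + 2*b + 3*c - a - 1)) :
    position (.inr (i, 0) : Vtx a b c) = 5 := rfl

def codedLists (a b c : ℕ) : Vtx a b c → Finset ℕ :=
  Lassign a b c (fun i j => Encodable.encode (.inr (.inr (i, j)) : Colour a b c))
    (fun i j => Encodable.encode (.inr (.inl (i, j)) : Colour a b c))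
    (fun i => Encodable.encode (.inl i : Colour a b c))

lemma codedLists_eq (v : Vtx a b c) :
    codedLists a b c v = (coloursAt a b c (position v)).image Encodable.encode := by
  ext n
  rcases v with ⟨_, j⟩ | ⟨_, j⟩ <;>
    simp [codedLists, Lassign, Aset, Bset, Eset, coloursAt, plainColoursAt, position, or_assoc,
      or_comm]

lemma card_Bidx : ∀ r, (Bidx r).card = 2 := by decide

lemma card_Aidx : ∀ r, (Aidx r).card = 3 := by decide

def colourClass : Colour a b c → Fin a ⊕ Fin b ⊕ Fin c :=
  Sum.map id (Sum.map Prod.fst Prod.fst)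

def classSize : Fin a ⊕ Fin b ⊕ Fin c → ℕ :=
  Sum.elim (fun _ => 1) (Sum.elim (fun _ => 2) fun _ => 3)

lemma classSize_le_card_inter (r : Fin 7) (q : Fin a ⊕ Fin b ⊕ Fin c) :
    classSize q ≤ (coloursAt a b c r ∩ univ.filter (colourClass · = q)).card := by
  rcases q with i | i | i
  · exact Finset.card_pos.2
      ⟨.inl i, mem_inter.2 ⟨by simp [coloursAt], mem_filter.2 ⟨mem_univ _, rfl⟩⟩⟩
  · refine (card_Bidx r).ge.trans (Finset.card_le_card_of_injOn (fun j => .inr (.inl (i, j)))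
      (fun j hj => ?_) fun j _ j' _ h => by simpa using h)
    exact Finset.mem_inter.2
      ⟨by simpa [coloursAt, plainColoursAt] using hj, Finset.mem_filter.2 ⟨mem_univ _, rfl⟩⟩
  · refine (card_Aidx r).ge.trans (Finset.card_le_card_of_injOn (fun j => .inr (.inr (i, j)))
      (fun j hj => ?_) fun j _ j' _ h => by simpa using h)
    exact Finset.mem_inter.2
      ⟨by simpa [coloursAt, plainColoursAt] using hj, Finset.mem_filter.2 ⟨mem_univ _, rfl⟩⟩

lemma lamAssignment_codedLists :
    LamAssignment (List.replicate a 1 ++ List.replicate b 2 ++ List.replicate c 3)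
      (codedLists a b c) := by
  have hQ : (List.ofFn (Sum.inl : Fin a → Fin a ⊕ Fin b ⊕ Fin c) ++
      List.ofFn (Sum.inr ∘ Sum.inl) ++ List.ofFn (Sum.inr ∘ Sum.inr)).Nodup := by
    simp [List.nodup_append, List.nodup_ofFn, Sum.inl_injective, Sum.inr_injective]
  have := lamAssignment_image_of_fibres Encodable.encode_injective colourClass hQ
    (by rintro (_ | _ | _) <;> simp [colourClass]) classSize
    (fun v : Vtx a b c => coloursAt a b c (position v)) fun q v => classSize_le_card_inter _ q
  rw [show codedLists a b c = _ from funext codedLists_eq]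
  simpa [classSize, List.map_ofFn, comp_def] using this

end Colours

lemma exists_notMem_slotsAt_castLE :
    ∀ d : Slot, ∃ r : Fin 5, d ∉ slotsAt (Fin.castLE (by norm_num) r) := by
  decide

lemma notMem_slotsAt_six_of_mem_five : ∀ d : Slot, d ∈ slotsAt 5 → d ∉ slotsAt 6 := by
  decide

lemma notMem_slotsAt_six_of_cover : ∀ d d' : Slot,
    (∀ r : Fin 5, d ∈ slotsAt (Fin.castLE (by norm_num) r) ∨
      d' ∈ slotsAt (Fin.castLE (by norm_num) r)) → d ∉ slotsAt 6 := by
  decide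

section ListColouring

variable {a b c : ℕ} {g : Vtx a b c → Colour a b c}

def weight : Colour a b c → ℕ := Sum.elim (fun _ => 2) fun _ => 1

lemma one_le_weight (κ : Colour a b c) : 1 ≤ weight κ := by
  rcases κ with _ | _ <;> simp [weight]

lemma sum_weight : ∑ κ : Colour a b c, weight κ = 2 * (a + 2 * b + 3 * c) := by
  simp [weight, Fintype.sum_sum_type]
  ring

def partColours (g : Vtx a b c → Colour a b c) (p : Fin (a + 1) ⊕ Fin (a + 2*b + 3*c - a - 1)) :
    Finset (Colour a b c) :=
  (univ.filter (partOf a b c · = p)).image g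

lemma mem_partColours {p} {κ : Colour a b c} :
    κ ∈ partColours g p ↔ ∃ v, partOf a b c v = p ∧ g v = κ := by
  simp [partColours]

lemma pairwise_disjoint_partColours
    (hproper : ∀ u v, partOf a b c u ≠ partOf a b c v → g u ≠ g v) :
    Pairwise (Disjoint on partColours g) := by
  intro p q hpq
  rw [onFun, Finset.disjoint_left]
  rintro κ hp hq
  obtain ⟨u, rfl, rfl⟩ := mem_partColours.1 hp
  obtain ⟨v, rfl, huv⟩ := mem_partColours.1 hq
  exact hproper u v hpq huv.symm

lemma slot_mem_slotsAt (hg : ∀ v, g v ∈ coloursAt a b c (position v)) {v : Vtx a b c} {κ}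
    (hκ : g v = .inr κ) : Sum.map Prod.snd Prod.snd κ ∈ slotsAt (position v) := by
  have := hg v
  rw [hκ, coloursAt, Finset.inr_mem_disjSum] at this
  exact mem_plainColoursAt.1 this

lemma exists_part_slot_notMem (p : Fin (a + 1) ⊕ Fin (a + 2*b + 3*c - a - 1)) (d : Slot) :
    ∃ v, partOf a b c v = p ∧ d ∉ slotsAt (position v) := by
  rcases p with i | i
  · obtain ⟨r, hr⟩ := exists_notMem_slotsAt_castLE d
    exact ⟨.inl (i, r), rfl, hr⟩
  · by_cases h5 : d ∈ slotsAt 5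
    · exact ⟨.inr (i, 1), rfl, notMem_slotsAt_six_of_mem_five d h5⟩
    · exact ⟨.inr (i, 0), rfl, h5⟩

lemma two_le_sum_weight_partColours (hg : ∀ v, g v ∈ coloursAt a b c (position v)) (p) :
    2 ≤ ∑ κ ∈ partColours g p, weight κ := by
  obtain ⟨v₀, hv₀⟩ := partOf_surjective a b c p
  have hv₀_mem : g v₀ ∈ partColours g p := mem_partColours.2 ⟨v₀, hv₀, rfl⟩
  rcases hκ : g v₀ with e | κ
  · exact Finset.single_le_sum (f := weight) (fun _ _ => Nat.zero_le _) (hκ ▸ hv₀_mem)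
  · obtain ⟨v, hv, hslot⟩ := exists_part_slot_notMem p (Sum.map Prod.snd Prod.snd κ)
    have hne : g v ≠ g v₀ := fun h => hslot (slot_mem_slotsAt hg (h.trans hκ))
    calc 2 ≤ weight (g v) + weight (g v₀) := add_le_add (one_le_weight _) (one_le_weight _)
      _ ≤ _ := add_le_sum_of_ne (mem_partColours.2 ⟨v, hv, rfl⟩) hv₀_mem hne

lemma inr_notMem_partColours_inl (hg : ∀ v, g v ∈ coloursAt a b c (position v))
    (i : Fin (a + 1)) (h2 : ∑ κ ∈ partColours g (.inl i), weight κ = 2)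
    {κ} (hκ : κ ∈ plainColoursAt b c 6) : .inr κ ∉ partColours g (.inl i) := by
  intro hmem
  have hu (r : Fin 5) : g (.inl (i, r)) ∈ partColours g (.inl i) :=
    mem_partColours.2 ⟨_, rfl, rfl⟩
  by_cases hall : ∀ r, g (.inl (i, r)) = .inr κ
  · obtain ⟨r, hr⟩ := exists_notMem_slotsAt_castLE (Sum.map Prod.snd Prod.snd κ)
    exact hr (position_inl i r ▸ slot_mem_slotsAt hg (hall r))
  obtain ⟨r₀, hr₀⟩ := not_forall.1 hall
  have hw : weight (.inr κ : Colour a b c) + weight (g (.inl (i, r₀))) ≤ 2 :=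
    (add_le_sum_of_ne hmem (hu r₀) (Ne.symm hr₀)).trans h2.le
  obtain ⟨κ', hκ'⟩ : ∃ κ', g (.inl (i, r₀)) = .inr κ' := by
    rcases h : g (.inl (i, r₀)) with e | κ'
    · rw [h] at hw
      simp [weight] at hw
    · exact ⟨κ', rfl⟩
  have htwo (r : Fin 5) : g (.inl (i, r)) = .inr κ ∨ g (.inl (i, r)) = .inr κ' := by
    by_contra! h
    have h3 : 2 < (partColours g (.inl i)).card := Finset.two_lt_card.2
      ⟨_, hmem, _, hu r₀, _, hu r, Ne.symm hr₀, h.1.symm, hκ' ▸ h.2.symm⟩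
    have := card_le_sum_of_one_le (s := partColours g (.inl i)) one_le_weight
    omega
  refine notMem_slotsAt_six_of_cover _ (Sum.map Prod.snd Prod.snd κ') (fun r => ?_)
    (mem_plainColoursAt.1 hκ)
  rw [← position_inl i r]
  exact (htwo r).imp (slot_mem_slotsAt hg) (slot_mem_slotsAt hg)

lemma map_plainColoursAt_six_subset (hg : ∀ v, g v ∈ coloursAt a b c (position v))
    (hbig : ∀ i, ∑ κ ∈ partColours g (.inl i), weight κ = 2)
    (hcover : ∀ κ, ∃ p, κ ∈ partColours g p) :
    (plainColoursAt b c 6).map .inr ⊆ univ.image fun i => g (.inr (i, 1)) := by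
  intro x hx
  obtain ⟨κ, hκ, rfl⟩ := Finset.mem_map.1 hx
  obtain ⟨p, hp⟩ := hcover (.inr κ)
  obtain ⟨v, rfl, hv⟩ := mem_partColours.1 hp
  rcases v with ⟨i, r⟩ | ⟨i, q⟩
  · exact absurd hp (inr_notMem_partColours_inl hg i (hbig i) hκ)
  · obtain rfl | rfl : q = 0 ∨ q = 1 := by omega
    · exact absurd (mem_plainColoursAt.1 hκ)
        (notMem_slotsAt_six_of_mem_five _ (position_inr_zero i ▸ slot_mem_slotsAt hg hv))
    · exact Finset.mem_image.2 ⟨i, mem_univ _, hv⟩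

theorem false_of_listColouring (hbc : 1 ≤ 2 * b + 3 * c)
    (hg : ∀ v, g v ∈ coloursAt a b c (position v))
    (hproper : ∀ u v, partOf a b c u ≠ partOf a b c v → g u ≠ g v) : False := by
  obtain ⟨hpart, hcover⟩ := sum_eq_and_forall_mem_of_pairwise_disjoint
    (pairwise_disjoint_partColours hproper) one_le_weight (n := 2)
    (by rw [sum_weight, card_parts a b c hbc, mul_comm]) (two_le_sum_weight_partColours hg)
  have hY := Finset.card_le_card (map_plainColoursAt_six_subset hg (fun i => hpart _) hcover)
  rw [Finset.card_map, card_plainColoursAt_six] at hY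
  have hsmall : (univ.image fun i => g (.inr (i, 1))).card ≤ a + 2*b + 3*c - a - 1 :=
    Finset.card_image_le.trans (Finset.card_fin _).le
  omega

end ListColouring

/-- Lemma `upper lemma 1`: for `k = a + 2b + 3c` (with `c ≥ 1`), the complete
`k`-partite graph `K_{5⋆(a+1), 2⋆(k-a-1)}` has chromatic number `k`, has
`2k + 3a + 3` vertices, and is not `λ`-choosable for `λ = {1⋆a, 2⋆b, 3⋆c}`. -/
theorem stmt8 (a b c : ℕ) (hc : 1 ≤ c) :
    (Gmp a b c).chromaticNumber = ((a + 2*b + 3*c : ℕ) : ℕ∞) ∧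
    Fintype.card (Vtx a b c) = 2*(a + 2*b + 3*c) + 3*a + 3 ∧
    ¬ LamChoosable (Gmp a b c)
        (List.replicate a 1 ++ List.replicate b 2 ++ List.replicate c 3) := by
  have hbc : 1 ≤ 2 * b + 3 * c := by omega
  refine ⟨chromaticNumber_Gmp a b c hbc, ?_, fun hchoosable => ?_⟩
  · simp only [Fintype.card_sum, Fintype.card_prod, Fintype.card_fin]
    omega
  obtain ⟨f, hf_mem, hf_proper⟩ := hchoosable _ lamAssignment_codedLists
  choose g hg hfg using fun v => Finset.mem_image.1 (codedLists_eq v ▸ hf_mem v)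
  refine false_of_listColouring hbc hg fun u v huv hguv => hf_proper (Gmp_adj.2 huv) ?_
  rw [← hfg u, ← hfg v, hguv]
end

section
/- Let φ be a proper list coloring of the complete k-partite graph G = K_{5⋆(a+1),2⋆(k−a−1)} with respect to the list assignment L of Lemma 'upper lemma 1'. Then for every partite set P of G, either φ(P) = {e} for a single color e ∈ E, or |φ(P)| ≥ 2 and φ(P) ∩ E = ∅; consequently |φ(V(G))| ≥ a + 2(k − a) = 2k − a. -/
/-!
Give each partite set `P` the weight `2·|φ(P) ∩ E| + |φ(P) \ E|`. The lists of `P` have only the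
colours of `E` in common, so a part avoiding `E` gets at least two colours, and every weight is at
least `2`. Colour classes of distinct parts are disjoint, so the weights add up to at most
`2|E| + |S ∪ T| ≤ 2a + 2(2b + 3c)`, at most twice the number of parts. Hence every weight is
exactly `2`, which is the dichotomy, and counting colours gives `a + 2(2b + 3c) = 2k - a`.
-/

open Finset

open Function

section DisjointClasses

variable {ι α : Type*} [Fintype ι] [DecidableEq α] {F : ι → Finset α} {E X : Finset α} {n : ℕ}

theorem sum_card_le_of_pairwise_disjoint {Y : Finset α} (hdisj : Pairwise (Disjoint on F))
    (hsub : ∀ p, F p ⊆ Y) : ∑ p, #(F p) ≤ #Y := by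
  rw [← card_biUnion fun p _ q _ hpq => hdisj hpq]
  exact card_le_card (biUnion_subset.2 fun p _ => hsub p)

theorem sum_card_inter_le (hdisj : Pairwise (Disjoint on F)) : ∑ p, #(F p ∩ E) ≤ #E :=
  sum_card_le_of_pairwise_disjoint (fun _ _ h => (hdisj h).mono inter_subset_left inter_subset_left)
    fun _ => inter_subset_right

theorem two_mul_card_inter_add_card_sdiff_eq_two (hdisj : Pairwise (Disjoint on F))
    (htwo : ∀ p, F p ∩ E = ∅ → 2 ≤ #(F p)) (hX : ∀ p, F p \ E ⊆ X) (hXcard : #X ≤ 2 * n)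
    (hcard : #E + n ≤ Fintype.card ι) (p : ι) :
    2 * #(F p ∩ E) + #(F p \ E) = 2 := by
  have hle : ∀ q ∈ univ, 2 ≤ 2 * #(F q ∩ E) + #(F q \ E) := by
    intro q _
    by_cases hq : F q ∩ E = ∅
    · have := htwo q hq
      rw [← card_inter_add_card_sdiff (F q) E, hq, card_empty] at this
      omega
    · have := card_pos.2 (nonempty_iff_ne_empty.2 hq)
      omega
  have hinter := sum_card_inter_le (E := E) hdisj
  have hsdiff : ∑ q, #(F q \ E) ≤ #X :=
    sum_card_le_of_pairwise_disjoint (fun _ _ h => (hdisj h).mono sdiff_subset sdiff_subset) hX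
  have hsum : ∑ q, (2 * #(F q ∩ E) + #(F q \ E)) ≤ ∑ _q : ι, 2 := by
    rw [sum_add_distrib, ← mul_sum, sum_const, card_univ, smul_eq_mul]
    omega
  exact ((sum_eq_sum_iff_of_le hle).1 (le_antisymm (sum_le_sum hle) hsum) p (mem_univ p)).symm

theorem add_two_mul_le_card_biUnion (hdisj : Pairwise (Disjoint on F))
    (htwo : ∀ p, F p ∩ E = ∅ → 2 ≤ #(F p)) (hX : ∀ p, F p \ E ⊆ X) (hXcard : #X ≤ 2 * n)
    (hcard : #E + n ≤ Fintype.card ι) :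
    #E + 2 * n ≤ #(univ.biUnion F) := by
  have hw := two_mul_card_inter_add_card_sdiff_eq_two hdisj htwo hX hXcard hcard
  have hsum : ∑ p, (2 * #(F p ∩ E) + #(F p \ E)) = 2 * Fintype.card ι := by
    rw [sum_congr rfl fun p _ => hw p, sum_const, card_univ, smul_eq_mul, mul_comm]
  have hinter := sum_card_inter_le (E := E) hdisj
  rw [card_biUnion fun p _ q _ hpq => hdisj hpq]
  simp_rw [← card_inter_add_card_sdiff (F _) E]
  rw [sum_add_distrib]
  rw [sum_add_distrib, ← mul_sum] at hsum
  omega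

theorem eq_singleton_or_inter_eq_empty_of_two_mul_card_inter_add_card_sdiff_eq_two
    {s : Finset α} (h : 2 * #(s ∩ E) + #(s \ E) = 2) :
    (∃ e₀ ∈ E, s = {e₀}) ∨ (2 ≤ #s ∧ s ∩ E = ∅) := by
  rw [← card_inter_add_card_sdiff s E]
  obtain hinter | hinter : #(s ∩ E) = 1 ∨ #(s ∩ E) = 0 := by omega
  · left
    have hsE : s ⊆ E := sdiff_eq_empty_iff_subset.1 (card_eq_zero.1 (by omega))
    obtain ⟨e₀, he₀⟩ := card_eq_one.1 hinter
    rw [inter_eq_left.2 hsE] at he₀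
    exact ⟨e₀, hsE (he₀ ▸ mem_singleton_self e₀), he₀⟩
  · exact Or.inr ⟨by omega, card_eq_zero.1 hinter⟩

end DisjointClasses

theorem pairwise_disjoint_image_fiber {V ι β : Type*} [Fintype V] [DecidableEq ι] [DecidableEq β]
    (f : V → ι) {φ : V → β} (h : ∀ u v, f u ≠ f v → φ u ≠ φ v) :
    Pairwise (Disjoint on fun p => (univ.filter fun v => f v = p).image φ) := by
  intro p q hpq
  simp only [Function.onFun, disjoint_left, mem_image, mem_filter, mem_univ, true_and]
  rintro _ ⟨u, rfl, rfl⟩ ⟨v, hv, huv⟩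
  exact h v u (hv ▸ Ne.symm hpq) huv

section ListAssignment

variable {a b c : ℕ} {s : Fin c → Fin 6 → ℕ} {t : Fin b → Fin 4 → ℕ}

theorem mem_Aset {j : Fin 7} {x : ℕ} : x ∈ Aset c s j ↔ ∃ i, ∃ m ∈ Aidx j, s i m = x := by
  simp [Aset]

theorem mem_Bset {j : Fin 7} {x : ℕ} : x ∈ Bset b t j ↔ ∃ i, ∃ m ∈ Bidx j, t i m = x := by
  simp [Bset]

theorem mem_Aidx_of_mem_Aset_union_Bset (hs : Function.Injective fun p : Fin c × Fin 6 => s p.1 p.2)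
    (hst : ∀ (p : Fin c × Fin 6) (q : Fin b × Fin 4), s p.1 p.2 ≠ t q.1 q.2)
    {i : Fin c} {m : Fin 6} {j : Fin 7} (h : s i m ∈ Aset c s j ∪ Bset b t j) : m ∈ Aidx j := by
  rcases mem_union.1 h with h | h
  · obtain ⟨i', m', hm', heq⟩ := mem_Aset.1 h
    obtain ⟨-, rfl⟩ := Prod.mk.inj (hs (a₁ := (i', m')) (a₂ := (i, m)) heq)
    exact hm'
  · obtain ⟨i', m', -, heq⟩ := mem_Bset.1 h
    exact absurd heq.symm (hst (i, m) (i', m'))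

theorem mem_Bidx_of_mem_Aset_union_Bset (ht : Function.Injective fun p : Fin b × Fin 4 => t p.1 p.2)
    (hst : ∀ (p : Fin c × Fin 6) (q : Fin b × Fin 4), s p.1 p.2 ≠ t q.1 q.2)
    {i : Fin b} {m : Fin 4} {j : Fin 7} (h : t i m ∈ Aset c s j ∪ Bset b t j) : m ∈ Bidx j := by
  rcases mem_union.1 h with h | h
  · obtain ⟨i', m', -, heq⟩ := mem_Aset.1 h
    exact absurd heq (hst (i', m') (i, m))
  · obtain ⟨i', m', hm', heq⟩ := mem_Bset.1 h
    obtain ⟨-, rfl⟩ := Prod.mk.inj (ht (a₁ := (i', m')) (a₂ := (i, m)) heq)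
    exact hm'

theorem not_forall_mem_Aset_union_Bset (hs : Function.Injective fun p : Fin c × Fin 6 => s p.1 p.2)
    (ht : Function.Injective fun p : Fin b × Fin 4 => t p.1 p.2)
    (hst : ∀ (p : Fin c × Fin 6) (q : Fin b × Fin 4), s p.1 p.2 ≠ t q.1 q.2)
    {κ : Type*} [Nonempty κ] (f : κ → Fin 7) (hA : ∀ m, ∃ k, m ∉ Aidx (f k))
    (hB : ∀ m, ∃ k, m ∉ Bidx (f k)) (x : ℕ) :
    ¬ ∀ k, x ∈ Aset c s (f k) ∪ Bset b t (f k) := by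
  intro hx
  obtain ⟨k₀⟩ := ‹Nonempty κ›
  rcases mem_union.1 (hx k₀) with h | h
  · obtain ⟨i, m, -, rfl⟩ := mem_Aset.1 h
    obtain ⟨k, hk⟩ := hA m
    exact hk (mem_Aidx_of_mem_Aset_union_Bset hs hst (hx k))
  · obtain ⟨i, m, -, rfl⟩ := mem_Bset.1 h
    obtain ⟨k, hk⟩ := hB m
    exact hk (mem_Bidx_of_mem_Aset_union_Bset ht hst (hx k))

theorem mem_Eset_of_forall_mem_Lassign (hs : Function.Injective fun p : Fin c × Fin 6 => s p.1 p.2)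
    (ht : Function.Injective fun p : Fin b × Fin 4 => t p.1 p.2)
    (hst : ∀ (p : Fin c × Fin 6) (q : Fin b × Fin 4), s p.1 p.2 ≠ t q.1 q.2)
    {e : Fin a → ℕ} {p : Fin (a + 1) ⊕ Fin (a + 2*b + 3*c - a - 1)} {x : ℕ}
    (hx : ∀ v, partOf a b c v = p → x ∈ Lassign a b c s t e v) : x ∈ Eset a e := by
  by_contra hxE
  rcases p with i | i
  · exact not_forall_mem_Aset_union_Bset hs ht hst (Fin.castLE (by norm_num) : Fin 5 → Fin 7)
      (by decide) (by decide) x fun j => (mem_union.1 (hx (.inl (i, j)) rfl)).resolve_right hxE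
  · exact not_forall_mem_Aset_union_Bset hs ht hst (fun j : Fin 2 => (⟨j + 5, by omega⟩ : Fin 7))
      (by decide) (by decide) x fun j => (mem_union.1 (hx (.inr (i, j)) rfl)).resolve_right hxE

end ListAssignment

section Colouring

variable {a b c : ℕ} {s : Fin c → Fin 6 → ℕ} {t : Fin b → Fin 4 → ℕ} {e : Fin a → ℕ}
  {φ : Vtx a b c → ℕ}

theorem Gmp_adj_of_partOf_ne {u v : Vtx a b c} (h : partOf a b c u ≠ partOf a b c v) :
    (Gmp a b c).Adj u v := by
  rw [Gmp, SimpleGraph.fromRel_adj]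
  exact ⟨fun huv => h (congrArg _ huv), Or.inl h⟩

theorem Lassign_subset (v : Vtx a b c) :
    Lassign a b c s t e v ⊆ (univ.image fun q : Fin c × Fin 6 => s q.1 q.2) ∪
      (univ.image fun q : Fin b × Fin 4 => t q.1 q.2) ∪ Eset a e := by
  have hA : ∀ j, Aset c s j ⊆ univ.image fun q : Fin c × Fin 6 => s q.1 q.2 := fun j x hx => by
    obtain ⟨i, m, -, rfl⟩ := mem_Aset.1 hx
    exact mem_image_of_mem _ (mem_univ (i, m))
  have hB : ∀ j, Bset b t j ⊆ univ.image fun q : Fin b × Fin 4 => t q.1 q.2 := fun j x hx => by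
    obtain ⟨i, m, -, rfl⟩ := mem_Bset.1 hx
    exact mem_image_of_mem _ (mem_univ (i, m))
  rcases v with ⟨i, j⟩ | ⟨i, j⟩ <;>
    exact union_subset_union (union_subset_union (hA _) (hB _)) subset_rfl

theorem image_sdiff_Eset_subset (hmem : ∀ v, φ v ∈ Lassign a b c s t e v) (P : Finset (Vtx a b c)) :
    P.image φ \ Eset a e ⊆ (univ.image fun q : Fin c × Fin 6 => s q.1 q.2) ∪
      (univ.image fun q : Fin b × Fin 4 => t q.1 q.2) := by
  intro x hx
  obtain ⟨hxP, hxE⟩ := mem_sdiff.1 hx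
  obtain ⟨v, -, rfl⟩ := mem_image.1 hxP
  exact (mem_union.1 (Lassign_subset v (hmem v))).resolve_right hxE

theorem two_le_card_image_part (hs : Function.Injective fun p : Fin c × Fin 6 => s p.1 p.2)
    (ht : Function.Injective fun p : Fin b × Fin 4 => t p.1 p.2)
    (hst : ∀ (p : Fin c × Fin 6) (q : Fin b × Fin 4), s p.1 p.2 ≠ t q.1 q.2)
    (hmem : ∀ v, φ v ∈ Lassign a b c s t e v) (p : Fin (a + 1) ⊕ Fin (a + 2*b + 3*c - a - 1))
    (hp : (univ.filter fun v => partOf a b c v = p).image φ ∩ Eset a e = ∅) :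
    2 ≤ #((univ.filter fun v => partOf a b c v = p).image φ) := by
  set C := (univ.filter fun v => partOf a b c v = p).image φ
  have hC : ∀ v, partOf a b c v = p → φ v ∈ C := fun v hv =>
    mem_image_of_mem φ (mem_filter.2 ⟨mem_univ v, hv⟩)
  have hne : C.Nonempty := by
    rcases p with i | i
    exacts [⟨_, hC (.inl (i, 0)) rfl⟩, ⟨_, hC (.inr (i, 0)) rfl⟩]
  by_contra hlt
  obtain ⟨x, hx⟩ := card_eq_one.1 (le_antisymm (by omega) (card_pos.2 hne))
  have hxE : x ∈ Eset a e := mem_Eset_of_forall_mem_Lassign hs ht hst fun v hv =>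
    mem_singleton.1 (hx ▸ hC v hv) ▸ hmem v
  have : x ∈ C ∩ Eset a e := mem_inter.2 ⟨hx ▸ mem_singleton_self x, hxE⟩
  simp [hp] at this

end Colouring

theorem stmt9_general (a b c : ℕ) (s : Fin c → Fin 6 → ℕ) (t : Fin b → Fin 4 → ℕ)
    (e : Fin a → ℕ)
    (hs : Function.Injective fun p : Fin c × Fin 6 => s p.1 p.2)
    (ht : Function.Injective fun p : Fin b × Fin 4 => t p.1 p.2)
    (he : Function.Injective e)
    (hst : ∀ (p : Fin c × Fin 6) (q : Fin b × Fin 4), s p.1 p.2 ≠ t q.1 q.2)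
    (φ : Vtx a b c → ℕ)
    (hmem : ∀ v, φ v ∈ Lassign a b c s t e v)
    (hproper : ∀ ⦃u v⦄, (Gmp a b c).Adj u v → φ u ≠ φ v) :
    (∀ p : Fin (a + 1) ⊕ Fin (a + 2*b + 3*c - a - 1),
      (∃ e0 ∈ Eset a e,
          (Finset.univ.filter fun v => partOf a b c v = p).image φ = {e0}) ∨
      (2 ≤ ((Finset.univ.filter fun v => partOf a b c v = p).image φ).card ∧
        ((Finset.univ.filter fun v => partOf a b c v = p).image φ) ∩ Eset a e = ∅)) ∧
    2*(a + 2*b + 3*c) - a ≤ (Finset.univ.image φ).card := by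
  have hdisj := pairwise_disjoint_image_fiber (partOf a b c) fun u v h =>
    hproper (Gmp_adj_of_partOf_ne h)
  have htwo := two_le_card_image_part hs ht hst hmem
  have hX := fun p => image_sdiff_Eset_subset hmem (univ.filter fun v => partOf a b c v = p)
  have hE : #(Eset a e) = a := by simp [Eset, card_image_of_injective _ he]
  have hXcard : #((univ.image fun q : Fin c × Fin 6 => s q.1 q.2) ∪
      (univ.image fun q : Fin b × Fin 4 => t q.1 q.2)) ≤ 2 * (2 * b + 3 * c) := by
    have := (card_union_le _ _).trans (add_le_add (card_image_le (s := univ)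
      (f := fun q : Fin c × Fin 6 => s q.1 q.2)) (card_image_le (s := univ)
      (f := fun q : Fin b × Fin 4 => t q.1 q.2)))
    simp only [card_univ, Fintype.card_prod, Fintype.card_fin] at this
    omega
  have hcard : #(Eset a e) + (2 * b + 3 * c) ≤
      Fintype.card (Fin (a + 1) ⊕ Fin (a + 2*b + 3*c - a - 1)) := by
    simp only [hE, Fintype.card_sum, Fintype.card_fin]
    omega
  refine ⟨fun p => eq_singleton_or_inter_eq_empty_of_two_mul_card_inter_add_card_sdiff_eq_two
    (two_mul_card_inter_add_card_sdiff_eq_two hdisj htwo hX hXcard hcard p), ?_⟩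
  have hcount := add_two_mul_le_card_biUnion hdisj htwo hX hXcard hcard
  refine le_trans ?_ (hcount.trans (card_le_card
    (biUnion_subset.2 fun p _ => image_subset_image (filter_subset _ _))))
  omega

/-- For any proper colouring `φ` of `K_{5⋆(a+1),2⋆(k-a-1)}` from the lists of
Lemma `upper lemma 1`: every partite set `P` satisfies either `φ(P) = {e}`
for a single `e ∈ E`, or `|φ(P)| ≥ 2` and `φ(P) ∩ E = ∅`; consequently
`|φ(V(G))| ≥ 2k - a`. -/
theorem stmt9 (a b c : ℕ) (s : Fin c → Fin 6 → ℕ) (t : Fin b → Fin 4 → ℕ)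
    (e : Fin a → ℕ)
    (hs : Function.Injective fun p : Fin c × Fin 6 => s p.1 p.2)
    (ht : Function.Injective fun p : Fin b × Fin 4 => t p.1 p.2)
    (he : Function.Injective e)
    (hst : ∀ (p : Fin c × Fin 6) (q : Fin b × Fin 4), s p.1 p.2 ≠ t q.1 q.2)
    (hse : ∀ (p : Fin c × Fin 6) (m : Fin a), s p.1 p.2 ≠ e m)
    (hte : ∀ (q : Fin b × Fin 4) (m : Fin a), t q.1 q.2 ≠ e m)
    (φ : Vtx a b c → ℕ)
    (hmem : ∀ v, φ v ∈ Lassign a b c s t e v)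
    (hproper : ∀ ⦃u v⦄, (Gmp a b c).Adj u v → φ u ≠ φ v) :
    (∀ p : Fin (a + 1) ⊕ Fin (a + 2*b + 3*c - a - 1),
      (∃ e0 ∈ Eset a e,
          (Finset.univ.filter fun v => partOf a b c v = p).image φ = {e0}) ∨
      (2 ≤ ((Finset.univ.filter fun v => partOf a b c v = p).image φ).card ∧
        ((Finset.univ.filter fun v => partOf a b c v = p).image φ) ∩ Eset a e = ∅)) ∧
    2*(a + 2*b + 3*c) - a ≤ (Finset.univ.image φ).card :=
  stmt9_general a b c s t e hs ht he hst φ hmem hproper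
end
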